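/- arXiv:1509.09040 — 3 statements merged into one kernel-verified Lean document; each statement's English description precedes it below -/
import Mathlib

section
/- Let B be a unital C*-algebra, H a complex Hilbert space, and φ : B → B(H) a unital 2-positive linear map. Then for all unitary elements a, b ∈ B, ‖φ(a*b) − φ(a)*φ(b)‖² ≤ ‖φ(a*a) − φ(a)*φ(a)‖ · ‖φ(b*b) − φ(b)*φ(b)‖. -/
/-!
Write `X = φ a`, `Z = φ b` and `T = φ (a⋆b)`, so that `φ (a⋆a) = φ (b⋆b) = 1`. By Cauchy–Schwarz
for the block operator `[[1 - X⋆X, T - X⋆Z], [(T - X⋆Z)⋆, 1 - Z⋆Z]]`, it suffices that this block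
operator is positive, i.e. that `‖X x + Z y‖² ≤ ‖x‖² + ‖y‖² + 2 Re ⟪x, T y⟫` for all `x, y`.
For a 3-positive map this is the positivity of `φ` applied to `[1 a b]⋆[1 a b]`.

Two-positivity suffices because the unitary `a` can be averaged away: for a primitive `N`-th root
of unity `ζ`, `N = n + 2` and `gₖ = ∑_{s ≤ n} (ζᵏ a)ˢ`, one has `∑ₖ gₖ⋆gₖ = N (n + 1)` and
`∑ₖ ζᵏ gₖ⋆gₖ = N n a⋆`. Summing the positivity of `φ` on the two-term elements
`gₖ ⊗ (ζ̄ᵏ x - v) + gₖ b ⊗ y` gives the three-term positivity, with `v = X x + Z y`, up to a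
factor `n / (n + 1)` on the terms involving `a`; letting `n → ∞` removes it.
-/

open Finset RCLike ComplexConjugate
open scoped InnerProductSpace

section BlockOperator

variable {𝕜 E : Type*} [RCLike 𝕜] [NormedAddCommGroup E] [InnerProductSpace 𝕜 E]

theorem norm_inner_sq_le_of_re_inner_nonneg {P Q R : E →L[𝕜] E}
    (h : ∀ x y, 0 ≤ re ⟪x, P x⟫_𝕜 + re ⟪y, Q y⟫_𝕜 + 2 * re ⟪x, R y⟫_𝕜) (x y : E) :
    ‖⟪x, R y⟫_𝕜‖ ^ 2 ≤ re ⟪x, P x⟫_𝕜 * re ⟪y, Q y⟫_𝕜 := by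
  set B := ⟪x, R y⟫_𝕜
  have hP : 0 ≤ re ⟪x, P x⟫_𝕜 := by simpa using h x 0
  have hQ : 0 ≤ re ⟪y, Q y⟫_𝕜 := by simpa using h 0 y
  rcases eq_or_ne B 0 with hB | hB
  · rw [hB, norm_zero, sq, zero_mul]
    exact mul_nonneg hP hQ
  -- rotating `x` by the phase of `B` makes the cross term real, leaving a real quadratic in `t`
  have hquad : ∀ t : ℝ, 0 ≤ re ⟪x, P x⟫_𝕜 * (t * t) + 2 * ‖B‖ * t + re ⟪y, Q y⟫_𝕜 := by
    intro t
    have hB' : (‖B‖ : 𝕜) ≠ 0 := by simpa using hB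
    have hBB : B * conj B = (‖B‖ : 𝕜) ^ 2 := mul_conj B
    have e1 : (t : 𝕜) * (B / ‖B‖) * t * (conj B / ‖B‖) = ((t * t : ℝ) : 𝕜) := by
      push_cast; field_simp; rw [mul_assoc, hBB]
    have e2 : (t : 𝕜) * (conj B / ‖B‖) * B = ((‖B‖ * t : ℝ) : 𝕜) := by
      push_cast; field_simp; rw [mul_assoc, RCLike.conj_mul]
    have := h (((t : 𝕜) * (B / ‖B‖)) • x) y
    simp only [map_smul, inner_smul_left, inner_smul_right, ← mul_assoc, map_mul, map_div₀,
      conj_ofReal] at this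
    rw [e1, e2, re_ofReal_mul, ofReal_re] at this
    linarith
  have := discrim_le_zero hquad
  rw [discrim] at this
  nlinarith

theorem sq_opNorm_le_mul_of_re_inner_nonneg {P Q R : E →L[𝕜] E}
    (h : ∀ x y, 0 ≤ re ⟪x, P x⟫_𝕜 + re ⟪y, Q y⟫_𝕜 + 2 * re ⟪x, R y⟫_𝕜) :
    ‖R‖ ^ 2 ≤ ‖P‖ * ‖Q‖ := by
  rw [← Real.le_sqrt (norm_nonneg R) (by positivity)]
  refine ContinuousLinearMap.opNorm_le_of_re_inner_le (Real.sqrt_nonneg _) fun y x hy hx => ?_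
  have hQ : 0 ≤ re ⟪y, Q y⟫_𝕜 := by simpa using h 0 y
  have hle : ∀ (S : E →L[𝕜] E) (z : E), ‖z‖ = 1 → re ⟪z, S z⟫_𝕜 ≤ ‖S‖ := fun S z hz => by
    simpa [hz] using (re_inner_le_norm z (S z)).trans
      (mul_le_mul_of_nonneg_left (S.le_opNorm z) (norm_nonneg z))
  calc re ⟪R y, x⟫_𝕜 ≤ ‖⟪x, R y⟫_𝕜‖ := by rw [inner_re_symm]; exact re_le_norm _
    _ ≤ √(re ⟪x, P x⟫_𝕜 * re ⟪y, Q y⟫_𝕜) :=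
        Real.le_sqrt_of_sq_le (norm_inner_sq_le_of_re_inner_nonneg h x y)
    _ ≤ √(‖P‖ * ‖Q‖) :=
        Real.sqrt_le_sqrt (mul_le_mul (hle P x hx) (hle Q y hy) hQ (norm_nonneg P))

variable [CompleteSpace E]

theorem Matrix.re_sum_inner_star_mul_self_apply_nonneg {n : Type*} [Fintype n]
    (T : Matrix n n (E →L[𝕜] E)) (u : n → E) :
    0 ≤ re (∑ i, ∑ j, ⟪u i, (star T * T) i j (u j)⟫_𝕜) := by
  have : ∑ i, ∑ j, ⟪u i, (star T * T) i j (u j)⟫_𝕜 = ∑ k, ((‖∑ j, T k j (u j)‖ ^ 2 : ℝ) : 𝕜) := by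
    simp only [Matrix.mul_apply, Matrix.star_apply, _root_.sum_apply,
      ContinuousLinearMap.star_eq_adjoint, mul_apply_eq_comp,
      ContinuousLinearMap.adjoint_inner_right, inner_sum, ofReal_pow,
      ← inner_self_eq_norm_sq_to_K, sum_inner]
    rw [Finset.sum_comm]
    exact (sum_congr rfl fun _ _ => Finset.sum_comm).trans Finset.sum_comm
  rw [this, map_sum]
  simp only [ofReal_re]
  positivity

end BlockOperator

section Fejer

theorem IsPrimitiveRoot.sum_pow_conj_pow_mul_pow {ζ : ℂ} {N : ℕ} (hζ : IsPrimitiveRoot ζ N)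
    {r s : ℕ} (hr : r < N) (hs : s < N) :
    ∑ k ∈ range N, (conj ζ ^ r * ζ ^ s) ^ k = if r = s then (N : ℂ) else 0 := by
  have hζ1 : conj ζ * ζ = 1 := by
    rw [Complex.conj_mul', hζ.norm'_eq_one (by omega)]; simp
  split_ifs with hrs
  · rw [hrs, ← mul_pow, hζ1]; simp
  have hne : conj ζ ^ r * ζ ^ s ≠ 1 := fun h => hrs <| hζ.pow_inj hr hs <| by
    calc ζ ^ r = ζ ^ r * (conj ζ ^ r * ζ ^ s) := by rw [h, mul_one]
      _ = ζ ^ s := by rw [← mul_assoc, ← mul_pow, mul_comm ζ, hζ1, one_pow, one_mul]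
  have hpow : (conj ζ ^ r * ζ ^ s) ^ N = 1 := by
    rw [mul_pow, ← pow_mul, ← pow_mul, mul_comm r, mul_comm s, pow_mul, pow_mul, ← map_pow,
      hζ.pow_eq_one]
    simp
  rw [geom_sum_eq hne, hpow, sub_self, zero_div]

variable {A : Type*} [Ring A] [StarRing A] [Algebra ℂ A] [StarModule ℂ A]

theorem sum_pow_smul_star_geom_mul_geom {a : A} (ha : star a * a = 1) {ζ : ℂ} {N : ℕ}
    (hζ : IsPrimitiveRoot ζ N) {n j : ℕ} (hnj : n + j ≤ N) :
    ∑ k ∈ range N, (ζ ^ k) ^ j •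
        (star (∑ s ∈ range n, (ζ ^ k • a) ^ s) * ∑ s ∈ range n, (ζ ^ k • a) ^ s)
      = ((N * (n - j) : ℕ) : ℂ) • star a ^ j := by
  have expand : ∀ k, (ζ ^ k) ^ j •
        (star (∑ s ∈ range n, (ζ ^ k • a) ^ s) * ∑ s ∈ range n, (ζ ^ k • a) ^ s)
      = ∑ r ∈ range n, ∑ s ∈ range n, (conj ζ ^ r * ζ ^ (s + j)) ^ k • (star a ^ r * a ^ s) := by
    intro k
    simp only [star_sum, smul_pow, star_smul, star_pow, sum_mul_sum, smul_sum,
      smul_mul_smul_comm, smul_smul, Complex.star_def]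
    refine sum_congr rfl fun r _ => sum_congr rfl fun s _ => ?_
    congr 1
    ring
  have hcount : #{s ∈ range n | s + j < n} = n - j := by
    rw [show {s ∈ range n | s + j < n} = range (n - j) by
      ext; simp only [mem_filter, mem_range]; omega, card_range]
  rw [sum_congr rfl fun k _ => expand k]
  calc ∑ k ∈ range N, ∑ r ∈ range n, ∑ s ∈ range n,
        (conj ζ ^ r * ζ ^ (s + j)) ^ k • (star a ^ r * a ^ s)
      = ∑ s ∈ range n, ∑ r ∈ range n,
          (∑ k ∈ range N, (conj ζ ^ r * ζ ^ (s + j)) ^ k) • (star a ^ r * a ^ s) := by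
        rw [sum_comm]
        refine (sum_congr rfl fun r _ => sum_comm).trans ?_
        rw [sum_comm]
        simp only [sum_smul]
    _ = ∑ s ∈ range n, ∑ r ∈ range n,
          if r = s + j then (N : ℂ) • (star a ^ r * a ^ s) else 0 := by
        refine sum_congr rfl fun s hs => sum_congr rfl fun r hr => ?_
        rw [hζ.sum_pow_conj_pow_mul_pow (by rw [mem_range] at hr; omega)
          (by rw [mem_range] at hs; omega), ite_smul, zero_smul]
    _ = ∑ s ∈ range n, if s + j < n then (N : ℂ) • star a ^ j else 0 := by
        refine sum_congr rfl fun s _ => ?_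
        simp only [sum_ite_eq', mem_range]
        rw [add_comm s j, pow_add, mul_assoc, pow_mul_pow_eq_one s ha, mul_one]
    _ = ((N * (n - j) : ℕ) : ℂ) • star a ^ j := by
        rw [sum_ite, sum_const_zero, add_zero, sum_const, hcount, Nat.cast_mul, mul_comm, mul_smul]
        simp only [Nat.cast_smul_eq_nsmul]

end Fejer

section TwoPositive

variable {A : Type*} [Ring A] [Algebra ℂ A]
variable {H : Type*} [NormedAddCommGroup H] [InnerProductSpace ℂ H]

theorem re_inner_map_sum_apply {ι : Type*} (φ : A →ₗ[ℂ] (H →L[ℂ] H)) (s : Finset ι)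
    (z : ι → A) (p q : H) :
    re ⟪p, φ (∑ k ∈ s, z k) q⟫_ℂ = ∑ k ∈ s, re ⟪p, φ (z k) q⟫_ℂ := by
  simp only [map_sum, _root_.sum_apply, inner_sum]

variable [StarRing A] [CompleteSpace H]

def IsTwoPositive (φ : A →ₗ[ℂ] (H →L[ℂ] H)) : Prop :=
  ∀ M : Matrix (Fin 2) (Fin 2) A, (∃ S : Matrix (Fin 2) (Fin 2) A, M = star S * S) →
    ∃ T : Matrix (Fin 2) (Fin 2) (H →L[ℂ] H), M.map φ = star T * T

variable {φ : A →ₗ[ℂ] (H →L[ℂ] H)}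

theorem IsTwoPositive.map_star (hφ : IsTwoPositive φ) (c : A) : φ (star c) = star (φ c) := by
  obtain ⟨T, hT⟩ := hφ _ ⟨!![1, c; 0, 0], rfl⟩
  have h := congrFun₂ (IsSelfAdjoint.star_mul_self T) 1 0
  rw [← hT] at h
  simpa [Matrix.mul_apply, Matrix.star_apply, Fin.sum_univ_two] using h.symm

theorem IsTwoPositive.re_inner_nonneg (hφ : IsTwoPositive φ) (c d : A) (ξ η : H) :
    0 ≤ re ⟪ξ, φ (star c * c) ξ⟫_ℂ + 2 * re ⟪ξ, φ (star c * d) η⟫_ℂ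
      + re ⟪η, φ (star d * d) η⟫_ℂ := by
  obtain ⟨T, hT⟩ := hφ _ ⟨!![c, d; 0, 0], rfl⟩
  have key := Matrix.re_sum_inner_star_mul_self_apply_nonneg T ![ξ, η]
  rw [← hT] at key
  simp only [Matrix.map_apply, Matrix.mul_apply, Matrix.star_apply, Fin.sum_univ_two,
    Matrix.of_apply, Matrix.cons_val', Matrix.cons_val_fin_one, Matrix.cons_val_zero,
    Matrix.cons_val_one, map_add, add_apply, mul_zero, map_zero, zero_apply, add_zero] at key
  have hsym : re ⟪η, φ (star d * c) ξ⟫_ℂ = re ⟪ξ, φ (star c * d) η⟫_ℂ := by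
    rw [← star_star c, ← star_mul, hφ.map_star, ContinuousLinearMap.star_eq_adjoint,
      ContinuousLinearMap.adjoint_inner_right, inner_re_symm, star_star]
  linarith

theorem IsTwoPositive.re_inner_smul_sub_nonneg (hφ : IsTwoPositive φ) (c d : A) {l : ℂ}
    (hl : ‖l‖ = 1) (x v y : H) :
    0 ≤ re ⟪x, φ (star c * c) x⟫_ℂ + re ⟪v, φ (star c * c) v⟫_ℂ + re ⟪y, φ (star d * d) y⟫_ℂ
      - 2 * re ⟪x, φ (l • (star c * c)) v⟫_ℂ + 2 * re ⟪x, φ (l • (star c * d)) y⟫_ℂ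
      - 2 * re ⟪v, φ (star c * d) y⟫_ℂ := by
  have h := hφ.re_inner_nonneg c d (conj l • x - v) y
  have hsa : ⟪v, φ (star c * c) x⟫_ℂ = conj ⟪x, φ (star c * c) v⟫_ℂ := by
    rw [inner_conj_symm, ← ContinuousLinearMap.adjoint_inner_right,
      ← ContinuousLinearMap.star_eq_adjoint, ← hφ.map_star, star_mul, star_star]
  have hphase : ∀ X Y : ℂ, re (conj l * (l * X - conj Y)) = re X - re (l * Y) := fun X Y => by
    rw [mul_sub, ← mul_assoc, Complex.conj_mul', hl, ← map_mul]
    simp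
  simp only [inner_sub_left, inner_sub_right, inner_smul_left, inner_smul_right, map_smul,
    _root_.smul_apply, conj_conj, hsa, map_sub] at h ⊢
  rw [hphase] at h
  linarith

variable [StarModule ℂ A]

theorem IsTwoPositive.fejer_approx_nonneg (hφ : IsTwoPositive φ) (hφ1 : φ 1 = 1) {a b : A}
    (ha : star a * a = 1) (hb : star b * b = 1) (x v y : H) (n : ℕ) :
    0 ≤ (n + 1) * (‖x‖ ^ 2 + ‖v‖ ^ 2 + ‖y‖ ^ 2 - 2 * re ⟪v, φ b y⟫_ℂ)
      + n * (2 * re ⟪x, φ (star a * b) y⟫_ℂ - 2 * re ⟪x, φ (star a) v⟫_ℂ) := by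
  set N := n + 2
  have hζ := Complex.isPrimitiveRoot_exp N (by omega)
  set ζ := Complex.exp (2 * Real.pi * Complex.I / N)
  set g : ℕ → A := fun k => ∑ s ∈ range (n + 1), (ζ ^ k • a) ^ s
  set h : ℕ → A := fun k => star (g k) * g k
  have h0 : ∑ k ∈ range N, h k = ((N * (n + 1) : ℕ) : ℂ) • 1 := by
    simpa only [pow_zero, one_smul, Nat.sub_zero] using
      sum_pow_smul_star_geom_mul_geom ha hζ (n := n + 1) (j := 0) (by omega)
  have h1 : ∑ k ∈ range N, ζ ^ k • h k = ((N * n : ℕ) : ℂ) • star a := by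
    simpa only [pow_one, Nat.add_sub_cancel] using
      sum_pow_smul_star_geom_mul_geom ha hζ (n := n + 1) (j := 1) (by omega)
  have hk : ∀ k ∈ range N, 0 ≤ re ⟪x, φ (h k) x⟫_ℂ + re ⟪v, φ (h k) v⟫_ℂ
      + re ⟪y, φ (star b * h k * b) y⟫_ℂ - 2 * re ⟪x, φ (ζ ^ k • h k) v⟫_ℂ
      + 2 * re ⟪x, φ ((ζ ^ k • h k) * b) y⟫_ℂ - 2 * re ⟪v, φ (h k * b) y⟫_ℂ := fun k _ => by
    have := hφ.re_inner_smul_sub_nonneg (g k) (g k * b) (l := ζ ^ k)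
      (by rw [norm_pow, hζ.norm'_eq_one (by omega), one_pow]) x v y
    simpa only [h, star_mul, mul_assoc, smul_mul_assoc] using this
  have hsum := sum_nonneg hk
  simp only [sum_add_distrib, sum_sub_distrib, ← mul_sum, ← re_inner_map_sum_apply,
    ← sum_mul] at hsum
  rw [h0, h1] at hsum
  have hre : ∀ (m : ℕ) (z : ℂ), re ((m : ℂ) * z) = m * re z := fun m z => by simp
  simp only [smul_mul_assoc, mul_smul_comm, mul_one, one_mul, hb, map_smul, hφ1,
    _root_.smul_apply, one_apply_eq_self, inner_smul_right, hre, inner_self_eq_norm_sq] at hsum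
  push_cast at hsum
  have hN : (0 : ℝ) < N := by positivity
  refine nonneg_of_mul_nonneg_right ?_ hN
  linarith

theorem nonneg_add_of_forall_nat_mul_add_nonneg {α β : ℝ}
    (h : ∀ n : ℕ, 0 ≤ (n + 1) * α + n * β) : 0 ≤ α + β := by
  by_contra! hneg
  obtain ⟨n, hn⟩ := exists_nat_gt (β / (α + β))
  have := (div_lt_iff_of_neg hneg).mp hn
  linarith [h n]

theorem IsTwoPositive.norm_map_add_map_sq_le (hφ : IsTwoPositive φ) (hφ1 : φ 1 = 1) {a b : A}
    (ha : star a * a = 1) (hb : star b * b = 1) (x y : H) :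
    ‖φ a x + φ b y‖ ^ 2 ≤ ‖x‖ ^ 2 + ‖y‖ ^ 2 + 2 * re ⟪x, φ (star a * b) y⟫_ℂ := by
  set v := φ a x + φ b y
  have h := nonneg_add_of_forall_nat_mul_add_nonneg (hφ.fejer_approx_nonneg hφ1 ha hb x v y)
  have hXv : re ⟪x, φ (star a) v⟫_ℂ = re ⟪φ a x, v⟫_ℂ := by
    rw [hφ.map_star, ContinuousLinearMap.star_eq_adjoint, ContinuousLinearMap.adjoint_inner_right]
  have hZv : re ⟪v, φ b y⟫_ℂ = re ⟪φ b y, v⟫_ℂ := inner_re_symm _ _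
  have hv : ‖v‖ ^ 2 = re ⟪φ a x, v⟫_ℂ + re ⟪φ b y, v⟫_ℂ := by
    rw [← inner_self_eq_norm_sq (𝕜 := ℂ), inner_add_left, map_add]
  linarith

end TwoPositive

/-- For a unital 2-positive linear map `φ : B → B(H)` and unitaries `a, b ∈ B`,
`‖φ(a*b) - φ(a)*φ(b)‖² ≤ ‖φ(a*a) - φ(a)*φ(a)‖ * ‖φ(b*b) - φ(b)*φ(b)‖`.
2-positivity is expressed via the canonical positive cone of a C*-algebra. -/
theorem sq_norm_gruss_star_unitary_of_two_positive
    {B : Type*} [CStarAlgebra B]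
    {H : Type*} [NormedAddCommGroup H] [InnerProductSpace ℂ H] [CompleteSpace H]
    (φ : B →ₗ[ℂ] (H →L[ℂ] H))
    (hunital : φ 1 = 1)
    (h2pos : ∀ M : Matrix (Fin 2) (Fin 2) B,
      (∃ S : Matrix (Fin 2) (Fin 2) B, M = star S * S) →
      ∃ T : Matrix (Fin 2) (Fin 2) (H →L[ℂ] H), M.map φ = star T * T)
    (a b : B) (ha : a ∈ unitary B) (hb : b ∈ unitary B) :
    ‖φ (star a * b) - star (φ a) * φ b‖ ^ 2 ≤
      ‖φ (star a * a) - star (φ a) * φ a‖ * ‖φ (star b * b) - star (φ b) * φ b‖ := by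
  have ha1 := (Unitary.mem_iff.mp ha).1
  have hb1 := (Unitary.mem_iff.mp hb).1
  refine sq_opNorm_le_mul_of_re_inner_nonneg fun x y => ?_
  have h := IsTwoPositive.norm_map_add_map_sq_le (φ := φ) h2pos hunital ha1 hb1 x y
  rw [norm_add_sq (𝕜 := ℂ)] at h
  rw [ha1, hb1, hunital]
  simp only [_root_.sub_apply, one_apply_eq_self, mul_apply_eq_comp, inner_sub_right,
    map_sub, ContinuousLinearMap.star_eq_adjoint, ContinuousLinearMap.adjoint_inner_right,
    inner_self_eq_norm_sq (𝕜 := ℂ)]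
  linarith
end

section
/- Let A be a unital C*-algebra with unit e, H a complex Hilbert space, and φ : A → B(H) a unital positive linear map. If a ∈ A is a normal element, then ‖φ(aa*) − φ(a)φ(a)*‖ ≤ (inf_{λ∈ℂ} ‖a − λe‖)². -/
/-!
Translating `a` by a scalar does not change `φ(aa*) - φ(a)φ(a)*`, so it suffices to bound this
quantity by `‖b‖²` for normal `b`. Both `φ(bb*)` and `φ(b)φ(b)*` are positive, and a difference of
positive elements has norm at most the larger of their norms; here `‖φ(bb*)‖ ≤ ‖bb*‖ = ‖b‖²` and
`‖φ(b)φ(b)*‖ = ‖φ(b)‖² ≤ ‖b‖²`. The last step is the contractivity of unital positive maps on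
normal elements: approximate `b` by `∑ λᵢ gᵢ(b)`, where `(gᵢ)` is a partition of unity on the
spectrum subordinate to small balls around points `λᵢ ∈ σ(b)`. The operators `φ(gᵢ(b))` are positive
with sum `1`, and for such operators `‖∑ λᵢ Pᵢ‖ ≤ max |λᵢ|` by Cauchy–Schwarz.
-/

open scoped ComplexOrder InnerProductSpace

section CStarAlgebra

variable {B : Type*} [CStarAlgebra B] [PartialOrder B] [StarOrderedRing B]

lemma IsSelfAdjoint.norm_le_of_mem_Icc {x : B} (hx : IsSelfAdjoint x) {r : ℝ} (hr : 0 ≤ r)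
    (h : x ∈ Set.Icc (algebraMap ℝ B (-r)) (algebraMap ℝ B r)) : ‖x‖ ≤ r := by
  rcases subsingleton_or_nontrivial B with _ | _
  · simpa [Subsingleton.elim x 0] using hr
  have hle := (le_algebraMap_iff_spectrum_le hx).mp h.2
  have hge := (algebraMap_le_iff_le_spectrum hx).mp h.1
  rcases CStarAlgebra.norm_or_neg_norm_mem_spectrum hx with hmem | hmem
  · exact hle _ hmem
  · linarith [hge _ hmem]

lemma CStarAlgebra.norm_sub_le_max_of_nonneg {x y : B} (hx : 0 ≤ x) (hy : 0 ≤ y) :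
    ‖x - y‖ ≤ max ‖x‖ ‖y‖ := by
  have hmono := algebraMap_mono (α := ℝ) B
  refine (hx.isSelfAdjoint.sub hy.isSelfAdjoint).norm_le_of_mem_Icc (by positivity) ⟨?_, ?_⟩
  · calc algebraMap ℝ B (-max ‖x‖ ‖y‖) ≤ -algebraMap ℝ B ‖y‖ := by
          rw [map_neg, neg_le_neg_iff]; exact hmono (le_max_right _ _)
      _ ≤ -y := neg_le_neg hy.isSelfAdjoint.le_algebraMap_norm_self
      _ ≤ x - y := by simpa [sub_eq_neg_add] using hx
  · calc x - y ≤ x := sub_le_self _ hy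
      _ ≤ algebraMap ℝ B ‖x‖ := hx.isSelfAdjoint.le_algebraMap_norm_self
      _ ≤ algebraMap ℝ B (max ‖x‖ ‖y‖) := hmono (le_max_left _ _)

end CStarAlgebra

lemma ContinuousLinearMap.opNorm_le_of_norm_inner_le {𝕜 E F : Type*} [RCLike 𝕜]
    [NormedAddCommGroup E] [InnerProductSpace 𝕜 E] [NormedAddCommGroup F] [InnerProductSpace 𝕜 F]
    {T : E →L[𝕜] F} {C : ℝ} (hC : 0 ≤ C) (h : ∀ x y, ‖⟪T x, y⟫_𝕜‖ ≤ C * (‖x‖ * ‖y‖)) :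
    ‖T‖ ≤ C :=
  opNorm_le_of_re_inner_le hC fun x y hx hy => by
    simpa [hx, hy] using (RCLike.re_le_norm _).trans (h x y)

section HilbertSpace

variable {H : Type*} [NormedAddCommGroup H] [InnerProductSpace ℂ H] [CompleteSpace H]

lemma sum_norm_apply_sq_eq_of_sum_star_mul_self_eq_one {ι : Type*} [Fintype ι]
    {Q : ι → H →L[ℂ] H} (hQ : ∑ i, star (Q i) * Q i = 1) (v : H) :
    ∑ i, ‖Q i v‖ ^ 2 = ‖v‖ ^ 2 := by
  have h := congr_arg (fun T : H →L[ℂ] H => ⟪v, T v⟫_ℂ) hQ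
  simp only [sum_apply, inner_sum, mul_apply_eq_comp,
    ContinuousLinearMap.star_eq_adjoint, ContinuousLinearMap.adjoint_inner_right,
    one_apply_eq_self, inner_self_eq_norm_sq_to_K] at h
  exact_mod_cast h

lemma norm_sum_smul_le_of_nonneg_of_sum_eq_one {ι : Type*} [Fintype ι]
    {P : ι → H →L[ℂ] H} (hP : ∀ i, 0 ≤ P i) (hsum : ∑ i, P i = 1)
    {c : ι → ℂ} {M : ℝ} (hM : 0 ≤ M) (hc : ∀ i, ‖c i‖ ≤ M) :
    ‖∑ i, c i • P i‖ ≤ M := by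
  choose Q hQ using fun i => CStarAlgebra.nonneg_iff_eq_star_mul_self.mp (hP i)
  simp only [hQ] at hsum ⊢
  refine ContinuousLinearMap.opNorm_le_of_norm_inner_le hM fun v w => ?_
  calc ‖⟪(∑ i, c i • (star (Q i) * Q i)) v, w⟫_ℂ‖
      = ‖∑ i, star (c i) * ⟪Q i v, Q i w⟫_ℂ‖ := by
        simp [ContinuousLinearMap.star_eq_adjoint, ContinuousLinearMap.adjoint_inner_left,
          mul_comm]
    _ ≤ ∑ i, M * (‖Q i v‖ * ‖Q i w‖) := by
        refine (norm_sum_le _ _).trans (Finset.sum_le_sum fun i _ => ?_)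
        rw [norm_mul, norm_star]
        exact mul_le_mul (hc i) (norm_inner_le_norm _ _) (norm_nonneg _) hM
    _ ≤ M * (√(∑ i, ‖Q i v‖ ^ 2) * √(∑ i, ‖Q i w‖ ^ 2)) := by
        rw [← Finset.mul_sum]
        gcongr
        exact Real.sum_mul_le_sqrt_mul_sqrt _ _ _
    _ = M * (‖v‖ * ‖w‖) := by
        simp only [sum_norm_apply_sq_eq_of_sum_star_mul_self_eq_one hsum,
          Real.sqrt_sq (norm_nonneg _)]

end HilbertSpace

lemma IsCompact.exists_partitionOfUnity_subordinate_balls {X : Type*} [MetricSpace X] {K : Set X}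
    (hK : IsCompact K) {δ : ℝ} (hδ : 0 < δ) :
    ∃ t : Finset X, ↑t ⊆ K ∧
      ∃ ρ : PartitionOfUnity t X K, ρ.IsSubordinate fun l => Metric.ball (l : X) δ := by
  obtain ⟨t, htK, hcover⟩ := hK.elim_nhds_subcover (fun l => Metric.ball l δ)
    fun l _ => Metric.ball_mem_nhds l hδ
  refine ⟨t, htK, PartitionOfUnity.exists_isSubordinate hK.isClosed _
    (fun _ => Metric.isOpen_ball) fun z hz => ?_⟩
  obtain ⟨l, hl, hzl⟩ := Set.mem_iUnion₂.mp (hcover hz)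
  exact Set.mem_iUnion.mpr ⟨⟨l, hl⟩, hzl⟩

section CFC

variable {A : Type*} [CStarAlgebra A] {ι : Type*} [Fintype ι] {b : A} [IsStarNormal b]

lemma PartitionOfUnity.sum_cfc_eq_one (ρ : PartitionOfUnity ι ℂ (spectrum ℂ b)) :
    ∑ i, cfc (fun z => (ρ i z : ℂ)) b = 1 := by
  rw [← cfc_sum_univ _ b, ← cfc_one ℂ b]
  refine cfc_congr fun z hz => ?_
  simp only [Finset.sum_apply, Pi.one_apply]
  exact_mod_cast (finsum_eq_sum_of_fintype _).symm.trans (ρ.sum_eq_one hz)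

lemma PartitionOfUnity.norm_sub_sum_smul_cfc_le (ρ : PartitionOfUnity ι ℂ (spectrum ℂ b))
    {l : ι → ℂ} {δ : ℝ} (hδ : 0 ≤ δ) (hρ : ρ.IsSubordinate fun i => Metric.ball (l i) δ) :
    ‖b - ∑ i, l i • cfc (fun z => (ρ i z : ℂ)) b‖ ≤ δ := by
  have hsum : ∑ i, l i • cfc (fun z => (ρ i z : ℂ)) b = cfc (fun z => ∑ i, l i * ρ i z) b := by
    rw [← Finset.sum_fn, cfc_sum_univ _ b]
    exact Finset.sum_congr rfl fun i _ => (cfc_const_mul _ _ b).symm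
  calc ‖b - ∑ i, l i • cfc (fun z => (ρ i z : ℂ)) b‖
      = ‖cfc (fun z => z - ∑ i, l i * ρ i z) b‖ := by rw [cfc_sub _ _ b, cfc_id' ℂ b, hsum]
    _ ≤ δ := norm_cfc_le hδ fun z hz => by
      have hmem : ∑ᶠ i, ρ i z • l i ∈ Metric.closedBall z δ :=
        ρ.finsum_smul_mem_convex (g := fun i _ => l i) hz
          (fun i hi => Metric.ball_subset_closedBall <| Metric.mem_ball_comm.mp <|
            hρ i (subset_tsupport _ hi)) (convex_closedBall z δ)
      simpa [finsum_eq_sum_of_fintype, dist_eq_norm, norm_sub_rev z, Complex.real_smul, mul_comm]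
        using hmem

end CFC

section PositiveLinearMap

variable {A : Type*} [CStarAlgebra A] [PartialOrder A] [StarOrderedRing A]
  {H : Type*} [NormedAddCommGroup H] [InnerProductSpace ℂ H] [CompleteSpace H]

lemma PositiveLinearMap.norm_apply_le_of_isStarNormal (f : A →ₚ[ℂ] (H →L[ℂ] H)) (hf : f 1 = 1)
    (b : A) [IsStarNormal b] : ‖f b‖ ≤ ‖b‖ := by
  rcases subsingleton_or_nontrivial A with _ | _
  · simp [Subsingleton.elim b 0]
  obtain ⟨C, hC⟩ := f.exists_norm_apply_le
  have hδ : ∀ δ > 0, ‖f b‖ ≤ ‖b‖ + C * δ := by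
    intro δ hδ
    obtain ⟨t, htb, ρ, hρ⟩ :=
      (spectrum.isCompact (𝕜 := ℂ) b).exists_partitionOfUnity_subordinate_balls hδ
    set a := ∑ l : t, (l : ℂ) • cfc (fun z => (ρ l z : ℂ)) b
    have ha : ‖f a‖ ≤ ‖b‖ := by
      simp only [a, map_sum, map_smul]
      refine norm_sum_smul_le_of_nonneg_of_sum_eq_one
        (fun l => f.map_nonneg (cfc_nonneg fun z _ => Complex.zero_le_real.mpr (ρ.nonneg l z)))
        (by rw [← map_sum, ρ.sum_cfc_eq_one, hf]) (norm_nonneg b)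
        fun l => spectrum.norm_le_norm_of_mem (htb l.2)
    calc ‖f b‖ = ‖f a + f (b - a)‖ := by rw [← map_add, add_sub_cancel]
      _ ≤ ‖b‖ + C * δ := norm_add_le_of_le ha <|
          (hC _).trans (by gcongr; exact ρ.norm_sub_sum_smul_cfc_le hδ.le hρ)
  refine le_of_forall_pos_le_add fun ε hε => ?_
  calc ‖f b‖ ≤ ‖b‖ + C * (ε / (C + 1)) := hδ _ (by positivity)
    _ ≤ ‖b‖ + (C + 1) * (ε / (C + 1)) := by gcongr; linarith
    _ = ‖b‖ + ε := by field_simp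

lemma PositiveLinearMap.norm_apply_mul_star_sub_le (f : A →ₚ[ℂ] (H →L[ℂ] H)) (hf : f 1 = 1)
    (b : A) [IsStarNormal b] : ‖f (b * star b) - f b * star (f b)‖ ≤ ‖b‖ ^ 2 := by
  refine (CStarAlgebra.norm_sub_le_max_of_nonneg (f.map_nonneg (mul_star_self_nonneg b))
    (mul_star_self_nonneg (f b))).trans (max_le ?_ ?_)
  · calc ‖f (b * star b)‖ ≤ ‖f 1‖ * ‖b * star b‖ :=
          f.norm_apply_le_of_nonneg _ (mul_star_self_nonneg b)
      _ ≤ 1 * ‖b * star b‖ := by gcongr; rw [hf]; exact ContinuousLinearMap.norm_id_le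
      _ = ‖b‖ ^ 2 := by rw [one_mul, CStarRing.norm_self_mul_star, sq]
  · rw [CStarRing.norm_self_mul_star, ← sq]
    gcongr
    exact f.norm_apply_le_of_isStarNormal hf b

end PositiveLinearMap

lemma map_sub_smul_one_mul_star_sub {F R S : Type*} [Ring R] [StarRing R] [Algebra ℂ R]
    [StarModule ℂ R] [Ring S] [StarRing S] [Algebra ℂ S] [StarModule ℂ S] [FunLike F R S]
    [LinearMapClass F ℂ R S] [StarHomClass F R S] (f : F) (hf : f 1 = 1) (a : R) (z : ℂ) :
    f ((a - z • 1) * star (a - z • 1)) - f (a - z • 1) * star (f (a - z • 1)) =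
      f (a * star a) - f a * star (f a) := by
  simp only [star_sub, star_smul, star_one, sub_mul, mul_sub, smul_mul_assoc, mul_smul_comm,
    one_mul, mul_one, map_sub, map_smul, hf, map_star]
  module

/-- (Corollary 3.3). If `φ : A → B(H)` is a unital positive linear map and `a ∈ A` is normal,
then `‖φ(aa*) - φ(a)φ(a)*‖ ≤ (inf_λ ‖a - λ1‖)²`. -/
theorem variance_bound_of_positive_normal
    {A : Type*} [CStarAlgebra A] [PartialOrder A] [StarOrderedRing A]
    {H : Type*} [NormedAddCommGroup H] [InnerProductSpace ℂ H] [CompleteSpace H]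
    (φ : A →ₗ[ℂ] (H →L[ℂ] H))
    (hunital : φ 1 = 1)
    (hpos : ∀ x : A, 0 ≤ x → 0 ≤ φ x)
    (a : A) (ha : star a * a = a * star a) :
    ‖φ (a * star a) - φ a * star (φ a)‖ ≤ (⨅ z : ℂ, ‖a - z • (1 : A)‖) ^ 2 := by
  let f := PositiveLinearMap.mk₀ φ hpos
  have : IsStarNormal a := ⟨ha⟩
  have hbound (z : ℂ) : ‖φ (a * star a) - φ a * star (φ a)‖ ≤ ‖a - z • (1 : A)‖ ^ 2 := by
    have : IsStarNormal (a - z • 1) := Commute.isStarNormal_sub <| by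
      rw [star_smul, star_one]; exact (Commute.one_right a).smul_right _
    change ‖f (a * star a) - f a * star (f a)‖ ≤ _
    rw [← map_sub_smul_one_mul_star_sub f hunital a z]
    exact f.norm_apply_mul_star_sub_le hunital _
  have hsqrt : √‖φ (a * star a) - φ a * star (φ a)‖ ≤ ⨅ z : ℂ, ‖a - z • (1 : A)‖ :=
    le_ciInf fun z => Real.sqrt_le_iff.mpr ⟨norm_nonneg _, hbound z⟩
  exact (Real.sqrt_le_iff.mp hsqrt).2
end

section
/- Let A be a unital C*-algebra with unit e, H a complex Hilbert space, and φ : A → B(H) a unital completely positive linear map. Then for all a, b ∈ A, ‖φ(ab) − φ(a)φ(b)‖ ≤ (inf_{λ∈ℂ} ‖a − λe‖) · (inf_{μ∈ℂ} ‖b − μe‖). -/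
/-!
Because `φ` is unital, `φ (a * b) - φ a * φ b` is unchanged when `a` and `b` are shifted by
scalars, so it suffices to bound it by `‖a‖ * ‖b‖`. Complete positivity applied to the positive
matrix `[uᵢ⋆ uⱼ]` with `u = (1, a⋆, b)` makes `(v, w) ↦ ∑ᵢⱼ ⟪vᵢ, φ (uᵢ⋆ uⱼ) wⱼ⟫` the pull-back of
an inner product. At `v = (-φ (a⋆) ξ, ξ, 0)` and `w = (-φ b η, 0, η)` it equals
`⟪ξ, (φ (a * b) - φ a * φ b) η⟫`, while the squared lengths of `v` and `w` are
`⟪ξ, φ (a a⋆) ξ⟫ - ‖φ (a⋆) ξ‖² ≤ ‖a‖² ‖ξ‖²` and `⟪η, φ (b⋆ b) η⟫ - ‖φ b η‖² ≤ ‖b‖² ‖η‖²`,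
so Cauchy–Schwarz concludes.
-/

open scoped InnerProductSpace

theorem le_iInf_mul_iInf {ι κ : Type*} [Nonempty ι] [Nonempty κ] {c : ℝ} {f : ι → ℝ}
    {g : κ → ℝ} (hf : ∀ i, 0 ≤ f i) (hg : ∀ j, 0 ≤ g j) (h : ∀ i j, c ≤ f i * g j) :
    c ≤ (⨅ i, f i) * ⨅ j, g j := by
  rw [Real.iInf_mul_of_nonneg (Real.iInf_nonneg hg)]
  refine le_ciInf fun i => ?_
  rw [Real.mul_iInf_of_nonneg (hf i)]
  exact le_ciInf (h i)

section MulDefect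

variable {R A B : Type*} [CommRing R] [Ring A] [Algebra R A] [Ring B] [Algebra R B]

def mulDefect (φ : A →ₗ[R] B) (a b : A) : B :=
  φ (a * b) - φ a * φ b

theorem mulDefect_sub_smul_one (φ : A →ₗ[R] B) (hφ : φ 1 = 1) (a b : A) (z w : R) :
    mulDefect φ (a - z • 1) (b - w • 1) = mulDefect φ a b := by
  simp only [mulDefect, sub_mul, mul_sub, smul_mul_assoc, mul_smul_comm, one_mul, mul_one,
    map_sub, map_smul, hφ]
  module

end MulDefect

section CompletelyPositive

variable {A : Type*} [CStarAlgebra A]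
  {H : Type*} [NormedAddCommGroup H] [InnerProductSpace ℂ H] [CompleteSpace H]

theorem sum_inner_star_mul_self_apply_eq_inner {ι : Type*} [Fintype ι] (T : Matrix ι ι (H →L[ℂ] H))
    (v w : ι → H) :
    ∑ i, ∑ j, ⟪v i, (star T * T) i j (w j)⟫_ℂ =
      ⟪(WithLp.toLp 2 fun k => ∑ i, T k i (v i) : PiLp 2 fun _ : ι => H),
        WithLp.toLp 2 fun k => ∑ j, T k j (w j)⟫_ℂ := by
  simp only [PiLp.inner_apply, sum_inner, inner_sum, Matrix.mul_apply, Matrix.star_apply,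
    sum_apply, mul_apply_eq_comp, ContinuousLinearMap.star_eq_adjoint,
    ContinuousLinearMap.adjoint_inner_right]
  rw [Finset.sum_comm_cycle]
  exact Finset.sum_congr rfl fun _ _ => Finset.sum_comm

def IsCompletelyPositive (φ : A →ₗ[ℂ] (H →L[ℂ] H)) : Prop :=
  ∀ (n : ℕ) (M : Matrix (Fin n) (Fin n) A),
    (∃ S : Matrix (Fin n) (Fin n) A, M = star S * S) →
    ∃ T : Matrix (Fin n) (Fin n) (H →L[ℂ] H), M.map φ = star T * T

noncomputable def gramForm (φ : A →ₗ[ℂ] (H →L[ℂ] H)) {n : ℕ} (u : Fin n → A)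
    (v w : Fin n → H) : ℂ :=
  ∑ i, ∑ j, ⟪v i, φ (star (u i) * u j) (w j)⟫_ℂ

namespace IsCompletelyPositive

variable {φ : A →ₗ[ℂ] (H →L[ℂ] H)}

theorem exists_gramForm_eq_inner (hφ : IsCompletelyPositive φ) {n : ℕ} (u : Fin (n + 1) → A) :
    ∃ F : (Fin (n + 1) → H) → PiLp 2 (fun _ : Fin (n + 1) => H),
      ∀ v w, gramForm φ u v w = ⟪F v, F w⟫_ℂ := by
  obtain ⟨T, hT⟩ := hφ (n + 1) (.of fun i j => star (u i) * u j)
    ⟨.of fun k j => if k = 0 then u j else 0, by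
      ext i j; simp [Matrix.mul_apply, Matrix.star_apply]⟩
  refine ⟨fun v => WithLp.toLp 2 fun k => ∑ i, T k i (v i), fun v w => ?_⟩
  rw [← sum_inner_star_mul_self_apply_eq_inner, ← hT]
  rfl

theorem re_inner_map_star_mul_self_nonneg (hφ : IsCompletelyPositive φ) (s : A) (ξ : H) :
    0 ≤ (⟪ξ, φ (star s * s) ξ⟫_ℂ).re := by
  obtain ⟨F, hF⟩ := hφ.exists_gramForm_eq_inner ![s]
  have h : ⟪ξ, φ (star s * s) ξ⟫_ℂ = ⟪F ![ξ], F ![ξ]⟫_ℂ := by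
    simpa [gramForm] using hF ![ξ] ![ξ]
  rw [h]
  exact inner_self_nonneg (𝕜 := ℂ) (x := F ![ξ])

theorem map_star (hφ : IsCompletelyPositive φ) (x : A) : φ (star x) = star (φ x) := by
  obtain ⟨F, hF⟩ := hφ.exists_gramForm_eq_inner ![1, x]
  refine ContinuousLinearMap.ext fun ξ => ext_inner_right (𝕜 := ℂ) fun η => ?_
  have hξη : ⟪ξ, φ x η⟫_ℂ = ⟪F ![ξ, 0], F ![0, η]⟫_ℂ := by
    simpa [gramForm, Fin.sum_univ_two] using hF ![ξ, 0] ![0, η]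
  have hηξ : ⟪η, φ (star x) ξ⟫_ℂ = ⟪F ![0, η], F ![ξ, 0]⟫_ℂ := by
    simpa [gramForm, Fin.sum_univ_two] using hF ![0, η] ![ξ, 0]
  rw [ContinuousLinearMap.star_eq_adjoint, ContinuousLinearMap.adjoint_inner_left,
    ← inner_conj_symm, hηξ, inner_conj_symm, hξη]

theorem re_inner_map_star_mul_self_le (hφ : IsCompletelyPositive φ) (hunital : φ 1 = 1)
    (x : A) (ξ : H) :
    (⟪ξ, φ (star x * x) ξ⟫_ℂ).re ≤ ‖x‖ ^ 2 * ‖ξ‖ ^ 2 := by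
  let _ := CStarAlgebra.spectralOrder A
  let _ := CStarAlgebra.spectralOrderedRing A
  obtain ⟨s, hs⟩ := CStarAlgebra.nonneg_iff_eq_star_mul_self.mp
    (sub_nonneg.mpr (CStarAlgebra.star_mul_le_algebraMap_norm_sq (a := x)))
  have h := hφ.re_inner_map_star_mul_self_nonneg s ξ
  rw [← hs, Algebra.algebraMap_eq_smul_one, map_sub, LinearMap.map_smul_of_tower, hunital] at h
  simpa [← Complex.ofReal_pow] using h

theorem norm_inner_mulDefect_le (hφ : IsCompletelyPositive φ) (hunital : φ 1 = 1)
    (a b : A) (ξ η : H) :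
    ‖⟪ξ, mulDefect φ a b η⟫_ℂ‖ ≤ ‖a‖ * ‖ξ‖ * (‖b‖ * ‖η‖) := by
  obtain ⟨F, hF⟩ := hφ.exists_gramForm_eq_inner ![1, star a, b]
  set v : Fin 3 → H := ![-(φ (star a) ξ), ξ, 0]
  set w : Fin 3 → H := ![-(φ b η), 0, η]
  have hvw : ⟪F v, F w⟫_ℂ = ⟪ξ, mulDefect φ a b η⟫_ℂ := by
    rw [← hF]
    simp [v, w, gramForm, Fin.sum_univ_three, mulDefect, hunital, neg_add_eq_sub]
  have hFv : ‖F v‖ ^ 2 = (⟪ξ, φ (a * star a) ξ⟫_ℂ).re - ‖φ (star a) ξ‖ ^ 2 := by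
    have ha : φ a = star (φ (star a)) := by rw [hφ.map_star, star_star]
    rw [norm_sq_eq_re_inner (𝕜 := ℂ), ← hF]
    simp [v, gramForm, Fin.sum_univ_three, hunital, ha, ContinuousLinearMap.star_eq_adjoint,
      ContinuousLinearMap.adjoint_inner_right, ← Complex.ofReal_pow, neg_add_eq_sub]
  have hFw : ‖F w‖ ^ 2 = (⟪η, φ (star b * b) η⟫_ℂ).re - ‖φ b η‖ ^ 2 := by
    rw [norm_sq_eq_re_inner (𝕜 := ℂ), ← hF]
    simp [w, gramForm, Fin.sum_univ_three, hunital, hφ.map_star,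
      ContinuousLinearMap.star_eq_adjoint, ContinuousLinearMap.adjoint_inner_right,
      ← Complex.ofReal_pow, neg_add_eq_sub]
  have hFv_le : ‖F v‖ ≤ ‖a‖ * ‖ξ‖ := by
    refine (pow_le_pow_iff_left₀ (norm_nonneg _) (by positivity) two_ne_zero).mp ?_
    have hbound := hφ.re_inner_map_star_mul_self_le hunital (star a) ξ
    rw [star_star, norm_star] at hbound
    nlinarith
  have hFw_le : ‖F w‖ ≤ ‖b‖ * ‖η‖ := by
    refine (pow_le_pow_iff_left₀ (norm_nonneg _) (by positivity) two_ne_zero).mp ?_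
    nlinarith [hφ.re_inner_map_star_mul_self_le hunital b η]
  calc ‖⟪ξ, mulDefect φ a b η⟫_ℂ‖ = ‖⟪F v, F w⟫_ℂ‖ := by rw [hvw]
    _ ≤ ‖F v‖ * ‖F w‖ := norm_inner_le_norm _ _
    _ ≤ ‖a‖ * ‖ξ‖ * (‖b‖ * ‖η‖) := by gcongr

theorem norm_mulDefect_le (hφ : IsCompletelyPositive φ) (hunital : φ 1 = 1) (a b : A) :
    ‖mulDefect φ a b‖ ≤ ‖a‖ * ‖b‖ := by
  refine ContinuousLinearMap.opNorm_le_of_re_inner_le (by positivity) fun ξ η hξ hη => ?_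
  calc RCLike.re ⟪mulDefect φ a b ξ, η⟫_ℂ ≤ ‖⟪η, mulDefect φ a b ξ⟫_ℂ‖ := by
        rw [norm_inner_symm]; exact RCLike.re_le_norm _
    _ ≤ ‖a‖ * ‖b‖ := by
        simpa [hξ, hη] using hφ.norm_inner_mulDefect_le hunital a b η ξ

end IsCompletelyPositive

end CompletelyPositive

/-- (Remark 3.2). If `φ : A → B(H)` is a unital completely positive linear map on a unital
C*-algebra `A`, then the Grüss inequality
`‖φ(ab) - φ(a)φ(b)‖ ≤ (inf_λ ‖a - λ1‖) * (inf_μ ‖b - μ1‖)` holds for all `a, b ∈ A`.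
Complete positivity is expressed via the canonical positive cone of a C*-algebra:
an element is positive iff it is of the form `star s * s`. -/
theorem gruss_of_completely_positive
    {A : Type*} [CStarAlgebra A]
    {H : Type*} [NormedAddCommGroup H] [InnerProductSpace ℂ H] [CompleteSpace H]
    (φ : A →ₗ[ℂ] (H →L[ℂ] H))
    (hunital : φ 1 = 1)
    (hcp : ∀ (n : ℕ) (M : Matrix (Fin n) (Fin n) A),
      (∃ S : Matrix (Fin n) (Fin n) A, M = star S * S) →
      ∃ T : Matrix (Fin n) (Fin n) (H →L[ℂ] H), M.map φ = star T * T)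
    (a b : A) :
    ‖φ (a * b) - φ a * φ b‖ ≤
      (⨅ z : ℂ, ‖a - z • (1 : A)‖) * (⨅ z : ℂ, ‖b - z • (1 : A)‖) := by
  refine le_iInf_mul_iInf (fun _ => norm_nonneg _) (fun _ => norm_nonneg _) fun z w => ?_
  have h := IsCompletelyPositive.norm_mulDefect_le hcp hunital (a - z • 1) (b - w • 1)
  rwa [mulDefect_sub_smul_one φ hunital] at h
end
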